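/- arXiv:2509.24797 — 2 statements merged into one kernel-verified Lean document; each statement's English description precedes it below -/
import Mathlib

section
/- Under a uniform mixture of two product distributions with pairwise disjoint marginal supports, the normalized mutual information satisfies 2·I(u,v)/(H(u)+H(v)) = 4/(C+4), where C = H(u_1)+H(u_2)+H(v_1)+H(v_2). -/
open Finset

/-- Shannon entropy with base-2 logarithm of a pmf on a finite type. -/
noncomputable def shannonEntropy {α : Type*} [Fintype α] (p : α → ℝ) : ℝ :=
  -∑ x, p x * Real.logb 2 (p x)

private lemma half_logb_half (a : ℝ) :
    (a / 2) * Real.logb 2 (a / 2) = (a * Real.logb 2 a) / 2 - a / 2 := by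
  by_cases h : a = 0
  · simp [h]
  · rw [Real.logb_div h two_ne_zero, Real.logb_self_eq_one (by norm_num)]
    ring

private lemma sum_half_logb {α : Type*} [Fintype α] (p : α → ℝ) (hs : ∑ x, p x = 1) :
    ∑ x, (p x / 2) * Real.logb 2 (p x / 2)
      = (∑ x, p x * Real.logb 2 (p x)) / 2 - 1 / 2 := by
  calc ∑ x, (p x / 2) * Real.logb 2 (p x / 2)
      = ∑ x, ((p x * Real.logb 2 (p x)) / 2 - p x / 2) := by
        exact Finset.sum_congr rfl fun x _ => half_logb_half (p x)
    _ = (∑ x, p x * Real.logb 2 (p x)) / 2 - (∑ x, p x) / 2 := by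
        rw [Finset.sum_sub_distrib, Finset.sum_div, Finset.sum_div]
    _ = (∑ x, p x * Real.logb 2 (p x)) / 2 - 1 / 2 := by rw [hs]

private lemma ratio_logb (a b : ℝ) (ha : a ≠ 0) (hb : b ≠ 0) :
    Real.logb 2 ((a * b) / 2 / ((a / 2) * (b / 2))) = 1 := by
  have h : (a * b) / 2 / ((a / 2) * (b / 2)) = 2 := by
    field_simp
  rw [h]
  simp

/-- Under a uniform mixture of two product distributions with pairwise disjoint marginal
supports, the normalized mutual information satisfies
`2·I(u,v)/(H(u)+H(v)) = 4/(C+4)` where `C = H(u₁)+H(u₂)+H(v₁)+H(v₂)`. -/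
theorem stmt_2 {U V : Type*} [Fintype U] [Fintype V]
    (pu₁ pu₂ : U → ℝ) (pv₁ pv₂ : V → ℝ)
    (hu₁0 : ∀ u, 0 ≤ pu₁ u) (hu₂0 : ∀ u, 0 ≤ pu₂ u)
    (hv₁0 : ∀ v, 0 ≤ pv₁ v) (hv₂0 : ∀ v, 0 ≤ pv₂ v)
    (hu₁s : ∑ u, pu₁ u = 1) (hu₂s : ∑ u, pu₂ u = 1)
    (hv₁s : ∑ v, pv₁ v = 1) (hv₂s : ∑ v, pv₂ v = 1)
    (hudisj : ∀ u, pu₁ u = 0 ∨ pu₂ u = 0)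
    (hvdisj : ∀ v, pv₁ v = 0 ∨ pv₂ v = 0) :
    let p : U → V → ℝ := fun u v => (pu₁ u * pv₁ v + pu₂ u * pv₂ v) / 2
    let pU : U → ℝ := fun u => ∑ v, p u v
    let pV : V → ℝ := fun v => ∑ u, p u v
    let I : ℝ := ∑ u, ∑ v, p u v * Real.logb 2 (p u v / (pU u * pV v))
    let C : ℝ := shannonEntropy pu₁ + shannonEntropy pu₂ +
      shannonEntropy pv₁ + shannonEntropy pv₂
    2 * I / (shannonEntropy pU + shannonEntropy pV) = 4 / (C + 4) := by
  intro p pU pV I C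
  -- marginals
  have hpU : ∀ u, pU u = (pu₁ u + pu₂ u) / 2 := by
    intro u
    show ∑ v, (pu₁ u * pv₁ v + pu₂ u * pv₂ v) / 2 = (pu₁ u + pu₂ u) / 2
    rw [← Finset.sum_div, Finset.sum_add_distrib, ← Finset.mul_sum, ← Finset.mul_sum,
      hv₁s, hv₂s, mul_one, mul_one]
  have hpV : ∀ v, pV v = (pv₁ v + pv₂ v) / 2 := by
    intro v
    show ∑ u, (pu₁ u * pv₁ v + pu₂ u * pv₂ v) / 2 = (pv₁ v + pv₂ v) / 2
    rw [← Finset.sum_div, Finset.sum_add_distrib, ← Finset.sum_mul, ← Finset.sum_mul,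
      hu₁s, hu₂s, one_mul, one_mul]
  -- mutual information equals 1
  have hterm : ∀ u v, p u v * Real.logb 2 (p u v / (pU u * pV v)) = p u v := by
    intro u v
    have hp : p u v = (pu₁ u * pv₁ v + pu₂ u * pv₂ v) / 2 := rfl
    rcases hudisj u with hu | hu <;> rcases hvdisj v with hv | hv
    · by_cases h2u : pu₂ u = 0
      · simp [hp, hu, h2u]
      · by_cases h2v : pv₂ v = 0
        · simp [hp, hu, h2v]
        · simp only [hp, hpU u, hpV v, hu, hv, zero_mul, zero_add]
          rw [ratio_logb _ _ h2u h2v, mul_one]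
    · simp [hp, hu, hv]
    · simp [hp, hu, hv]
    · by_cases h1u : pu₁ u = 0
      · simp [hp, hu, h1u]
      · by_cases h1v : pv₁ v = 0
        · simp [hp, hv, h1v]
        · simp only [hp, hpU u, hpV v, hu, hv, mul_zero, add_zero, zero_mul]
          rw [ratio_logb _ _ h1u h1v, mul_one]
  have hI : I = 1 := by
    show (∑ u, ∑ v, p u v * Real.logb 2 (p u v / (pU u * pV v))) = 1
    have : ∀ u, (∑ v, p u v * Real.logb 2 (p u v / (pU u * pV v))) = pU u := by
      intro u
      exact Finset.sum_congr rfl fun v _ => hterm u v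
    rw [Finset.sum_congr rfl fun u _ => this u]
    have : ∑ u, pU u = ∑ u, (pu₁ u + pu₂ u) / 2 :=
      Finset.sum_congr rfl fun u _ => hpU u
    rw [this, ← Finset.sum_div, Finset.sum_add_distrib, hu₁s, hu₂s]
    norm_num
  -- entropy of marginals
  have hHU : shannonEntropy pU = (shannonEntropy pu₁ + shannonEntropy pu₂) / 2 + 1 := by
    have hsplit : ∀ u, pU u * Real.logb 2 (pU u)
        = (pu₁ u / 2) * Real.logb 2 (pu₁ u / 2) + (pu₂ u / 2) * Real.logb 2 (pu₂ u / 2) := by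
      intro u
      rcases hudisj u with h | h <;> simp [hpU u, h]
    unfold shannonEntropy
    rw [Finset.sum_congr rfl fun u _ => hsplit u, Finset.sum_add_distrib,
      sum_half_logb pu₁ hu₁s, sum_half_logb pu₂ hu₂s]
    ring
  have hHV : shannonEntropy pV = (shannonEntropy pv₁ + shannonEntropy pv₂) / 2 + 1 := by
    have hsplit : ∀ v, pV v * Real.logb 2 (pV v)
        = (pv₁ v / 2) * Real.logb 2 (pv₁ v / 2) + (pv₂ v / 2) * Real.logb 2 (pv₂ v / 2) := by
      intro v
      rcases hvdisj v with h | h <;> simp [hpV v, h]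
    unfold shannonEntropy
    rw [Finset.sum_congr rfl fun v _ => hsplit v, Finset.sum_add_distrib,
      sum_half_logb pv₁ hv₁s, sum_half_logb pv₂ hv₂s]
    ring
  have hC : C = shannonEntropy pu₁ + shannonEntropy pu₂ +
      shannonEntropy pv₁ + shannonEntropy pv₂ := rfl
  rw [hI, hHU, hHV]
  have hden : (shannonEntropy pu₁ + shannonEntropy pu₂) / 2 + 1 +
      ((shannonEntropy pv₁ + shannonEntropy pv₂) / 2 + 1) = (C + 4) / 2 := by
    rw [hC]; ring
  rw [hden, mul_one, div_div_eq_mul_div]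
  norm_num
end

section
/- For the α-mixture of two one-dimensional distributions with means μ_1 > 0 > μ_2 and equal variances σ², the function α ↦ μ(α)²/V(α), where μ(α) = (1-α)μ_1 + αμ_2 and V(α) = σ² + α(1-α)(μ_1-μ_2)², is continuous on [0,1], attains its minimum value 0 at α_dc = μ_1/(μ_1-μ_2), and is strictly decreasing on [0, α_dc]. -/
/-- For the α-mixture with means `μ₁ > 0 > μ₂` and equal variances `σ²`, the squared-SNR
`α ↦ μ(α)²/V(α)` is continuous on `[0,1]`, attains its minimum value `0` at
`α_dc = μ₁/(μ₁-μ₂)`, and is strictly decreasing on `[0, α_dc]`. -/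
theorem stmt_15 (μ₁ μ₂ σ : ℝ) (h1 : 0 < μ₁) (h2 : μ₂ < 0) (hσ : 0 < σ) :
    let m : ℝ → ℝ := fun α => (1 - α) * μ₁ + α * μ₂
    let V : ℝ → ℝ := fun α => σ ^ 2 + α * (1 - α) * (μ₁ - μ₂) ^ 2
    let g : ℝ → ℝ := fun α => m α ^ 2 / V α
    let αdc : ℝ := μ₁ / (μ₁ - μ₂)
    ContinuousOn g (Set.Icc 0 1) ∧ g αdc = 0 ∧
      (∀ α ∈ Set.Icc (0 : ℝ) 1, 0 ≤ g α) ∧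
      StrictAntiOn g (Set.Icc 0 αdc) := by
  intro m V g αdc
  have hd : 0 < μ₁ - μ₂ := by linarith
  have hdc1 : αdc < 1 := (div_lt_one hd).mpr (by linarith)
  have hVpos : ∀ α ∈ Set.Icc (0:ℝ) 1, 0 < V α := by
    intro α hα
    have h0 := hα.1
    have h1' := hα.2
    have hnn : 0 ≤ α * (1 - α) := mul_nonneg h0 (by linarith)
    have : 0 ≤ α * (1 - α) * (μ₁ - μ₂) ^ 2 := mul_nonneg hnn (sq_nonneg _)
    simp only [V]
    nlinarith [sq_nonneg σ]
  refine ⟨?_, ?_, ?_, ?_⟩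
  · apply ContinuousOn.div
    · exact (Continuous.continuousOn (by continuity))
    · exact (Continuous.continuousOn (by continuity))
    · intro α hα; exact ne_of_gt (hVpos α hα)
  · have hm : m αdc = 0 := by
      simp only [m, αdc]; field_simp; ring
    simp [g, hm]
  · intro α hα
    exact div_nonneg (sq_nonneg _) (le_of_lt (hVpos α hα))
  · intro a ha b hb hab
    have ha0 : 0 ≤ a := ha.1
    have hbd : b * (μ₁ - μ₂) ≤ μ₁ := by
      have := hb.2
      rw [le_div_iff₀ hd] at this
      exact this
    have hb1 : b < 1 := lt_of_le_of_lt hb.2 hdc1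
    have haIcc : a ∈ Set.Icc (0:ℝ) 1 := ⟨ha0, by linarith [ha.2]⟩
    have hbIcc : b ∈ Set.Icc (0:ℝ) 1 := ⟨by linarith, le_of_lt hb1⟩
    have hVa := hVpos a haIcc
    have hVb := hVpos b hbIcc
    have key : m b ^ 2 * V a < m a ^ 2 * V b := by
      simp only [m, V]
      -- rewrite with p = μ₁ - a*d, q = μ₁ - b*d
      have hq0 : 0 ≤ μ₁ - b * (μ₁ - μ₂) := by linarith
      have hqp : μ₁ - b * (μ₁ - μ₂) < μ₁ - a * (μ₁ - μ₂) := by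
        nlinarith [mul_pos (sub_pos.mpr hab) hd]
      have hq1 : (μ₁ - b * (μ₁ - μ₂)) * (1 - a) < (μ₁ - a * (μ₁ - μ₂)) * (1 - b) := by
        nlinarith [mul_pos (sub_pos.mpr hab) (neg_pos.mpr h2)]
      have hqa : (μ₁ - b * (μ₁ - μ₂)) * a ≤ (μ₁ - a * (μ₁ - μ₂)) * b := by
        nlinarith [mul_nonneg hq0 (sub_pos.mpr hab).le, mul_nonneg ha0 hd.le]
      have hprod : ((μ₁ - b * (μ₁ - μ₂)) * (1 - a)) * ((μ₁ - b * (μ₁ - μ₂)) * a)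
          ≤ ((μ₁ - a * (μ₁ - μ₂)) * (1 - b)) * ((μ₁ - a * (μ₁ - μ₂)) * b) := by
        apply mul_le_mul hq1.le hqa (mul_nonneg hq0 ha0)
        exact le_trans (mul_nonneg hq0 (by linarith : (0:ℝ) ≤ 1 - a)) hq1.le
      have hsq : (μ₁ - b * (μ₁ - μ₂)) ^ 2 < (μ₁ - a * (μ₁ - μ₂)) ^ 2 := by
        nlinarith
      nlinarith [mul_pos (mul_pos hσ hσ) (sub_pos.mpr hqp), sq_nonneg (μ₁ - μ₂),
        mul_le_mul_of_nonneg_right hprod (sq_nonneg (μ₁ - μ₂)),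
        mul_lt_mul_of_pos_right hsq (mul_pos hσ hσ)]
    simp only [g]
    rw [div_lt_div_iff₀ hVb hVa]
    exact key
end
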